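/- Let X be a finite-dimensional real normed space and K ⊂ X a pointed closed convex cone with nonempty interior. Then the function F_A : K → ℝ₊, F_A(x) := max{t ≥ 0 : x ∈ tA} (convention 0·A := K), is continuous on K for every set A ⊂ X satisfying condition (H) with this K, if and only if K is polyhedral (i.e. K is the intersection of finitely many closed half-spaces {x : ⟨x, x_i*⟩ ≥ 0}). -/

import Mathlib

/-
Under (H) the supremum defining `F_A` is attained: for `t > 0`, `F_A x ≥ t` iff `x ∈ t • A`.
Hence `F_A` is always upper semicontinuous, since `t • A` is closed. If `K` is polyhedral, it is
also lower semicontinuous on `K`: near any `x ∈ K` the cone still contains `y - t • x` for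
`t < 1`, so that `F_A y ≥ t F_A x`.

Conversely, choose a functional `u ≥ ‖·‖` on `K`, so that `C = K ∩ {u = 1}` is a compact convex
base. If `C` had infinitely many extreme points, they would accumulate at some `c ∈ C`; for
`A = c + K` one has `F_A c ≥ 1` but `F_A e < 1/2` at every extreme point `e ≠ c`, contradicting
continuity at `c`. Hence by Krein–Milman `K` is generated by finitely many vectors, and by
Minkowski–Weyl (Fourier–Motzkin elimination on the dual cone, then the bipolar theorem) `K` is a
finite intersection of half-spaces.
-/

open Set Filter Topology Pointwise

variable {X : Type*} [NormedAddCommGroup X] [NormedSpace ℝ X]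

/-- The set `t·A`, with the convention `0·A := K`. -/
noncomputable def scaled (K A : Set X) (t : ℝ) : Set X := if t = 0 then K else t • A

/-- `F_A(x) := max {t ≥ 0 : x ∈ tA}` (with the convention `0·A := K`), realized as a
supremum; under condition (H) the set `{t ≥ 0 : x ∈ tA}` is a compact interval
containing `0`, so the supremum is a maximum. -/
noncomputable def FA (K A : Set X) (x : X) : ℝ :=
  sSup {t : ℝ | 0 ≤ t ∧ x ∈ scaled K A t}

/-- `ℙA = {t • a : t > 0, a ∈ A}`. -/
def posScaled (A : Set X) : Set X := {x | ∃ t : ℝ, 0 < t ∧ ∃ a ∈ A, x = t • a}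

namespace PointedCone

section Field

variable {𝕜 V : Type*} [Field 𝕜] [LinearOrder 𝕜] [IsStrictOrderedRing 𝕜]
  [AddCommGroup V] [Module 𝕜 V]

lemma nonpos_of_mem_hull_neg {s : Set V} {ℓ : V →ₗ[𝕜] 𝕜} (hs : ∀ x ∈ s, ℓ x < 0) {z : V}
    (hz : z ∈ hull 𝕜 s) : ℓ z ≤ 0 ∧ (ℓ z = 0 → z = 0) := by
  induction hz using Submodule.span_induction with
  | mem x hx => exact ⟨(hs x hx).le, fun h => absurd h (hs x hx).ne⟩
  | zero => simp
  | add x y _ _ hx hy =>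
    rw [map_add]
    refine ⟨add_nonpos hx.1 hy.1, fun h => ?_⟩
    rw [hx.2 (by linarith [hx.1, hy.1]), hy.2 (by linarith [hx.1, hy.1]), add_zero]
  | smul c x _ hx =>
    rw [← Nonneg.coe_smul, map_smul, smul_eq_mul]
    refine ⟨mul_nonpos_of_nonneg_of_nonpos c.2 hx.1, fun h => ?_⟩
    rcases mul_eq_zero.1 h with hc | hx0
    · rw [hc, zero_smul]
    · rw [hx.2 hx0, smul_zero]

def elimPair (ℓ : V →ₗ[𝕜] 𝕜) : V →ₗ[{c : 𝕜 // 0 ≤ c}] V →ₗ[{c : 𝕜 // 0 ≤ c}] V :=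
  (LinearMap.mk₂ 𝕜 (fun y z => ℓ y • z - ℓ z • y)
    (fun _ _ _ => by simp only [map_add, add_smul, smul_add]; abel)
    (fun _ _ _ => by simp only [map_smul, smul_eq_mul, mul_smul, smul_sub, smul_comm (ℓ _)])
    (fun _ _ _ => by simp only [map_add, add_smul, smul_add]; abel)
    (fun _ _ _ => by simp only [map_smul, smul_eq_mul, mul_smul, smul_sub, smul_comm (ℓ _)])
    ).restrictScalars₁₂ _ _

lemma elimPair_apply (ℓ : V →ₗ[𝕜] 𝕜) (y z : V) : elimPair ℓ y z = ℓ y • z - ℓ z • y := rfl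

lemma mem_comap_positive {ℓ : V →ₗ[𝕜] 𝕜} {x : V} : x ∈ (positive 𝕜 𝕜).comap ℓ ↔ 0 ≤ ℓ x :=
  Iff.rfl

/-- **Fourier–Motzkin elimination.** -/
theorem hull_inf_comap_positive (s : Set V) (ℓ : V →ₗ[𝕜] 𝕜) :
    hull 𝕜 s ⊓ (positive 𝕜 𝕜).comap ℓ =
      hull 𝕜 ({x ∈ s | 0 ≤ ℓ x} ∪
        image2 (fun y z => ℓ y • z - ℓ z • y) {x ∈ s | 0 ≤ ℓ x} {x ∈ s | ℓ x < 0}) := by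
  set P := {x ∈ s | 0 ≤ ℓ x}
  set N := {x ∈ s | ℓ x < 0}
  have hPN : s = P ∪ N := by
    ext x; simp only [P, N, mem_union, mem_ofPred_eq, ← and_or_left, le_or_gt, and_true]
  apply le_antisymm
  · rintro x ⟨hx, hℓx⟩
    rw [hPN, hull, Submodule.span_union, SetLike.mem_coe, Submodule.mem_sup] at hx
    obtain ⟨y, hy, z, hz, rfl⟩ := hx
    rw [SetLike.mem_coe, mem_comap_positive, map_add] at hℓx
    have hℓy : 0 ≤ ℓ y :=
      (Submodule.span_le.2 (fun x hx => hx.2) : hull 𝕜 P ≤ (positive 𝕜 𝕜).comap ℓ) hy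
    obtain ⟨hℓz, hz0⟩ := nonpos_of_mem_hull_neg (fun x hx => hx.2) hz
    have hB : elimPair ℓ y z ∈ hull 𝕜 (image2 (fun y z => ℓ y • z - ℓ z • y) P N) := by
      have := Submodule.apply_mem_map₂ (elimPair ℓ) hy hz
      rwa [Submodule.map₂_span_span] at this
    have hyP : y ∈ hull 𝕜 (P ∪ image2 (fun y z => ℓ y • z - ℓ z • y) P N) :=
      Submodule.span_mono subset_union_left hy
    rcases hℓy.eq_or_lt with hy0 | hypos
    · rwa [hz0 (by linarith), add_zero]
    · have hx : y + z = (ℓ y)⁻¹ • elimPair ℓ y z + (1 + ℓ z / ℓ y) • y := by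
        rw [elimPair_apply, smul_sub, smul_smul, smul_smul, inv_mul_cancel₀ hypos.ne']
        module
      rw [hx]
      refine add_mem (smul_mem _ (inv_nonneg.2 hypos.le)
        (Submodule.span_mono subset_union_right hB)) (smul_mem _ ?_ hyP)
      rw [one_add_div hypos.ne']
      exact div_nonneg hℓx hypos.le
  · rw [Submodule.span_le]
    rintro _ (⟨hx, hℓx⟩ | ⟨y, ⟨hy, hℓy⟩, z, ⟨hz, hℓz⟩, rfl⟩)
    · exact ⟨subset_hull hx, hℓx⟩
    · refine ⟨?_, ?_⟩
      · dsimp only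
        rw [sub_eq_add_neg, ← neg_smul]
        exact add_mem (smul_mem _ hℓy (subset_hull hz))
          (smul_mem _ (neg_nonneg.2 hℓz.le) (subset_hull hy))
      · simp only [SetLike.mem_coe, mem_comap_positive, map_sub, map_smul,
          smul_eq_mul, mul_comm, sub_self, le_refl]

lemma FG.inf_comap_positive {C : PointedCone 𝕜 V} (hC : C.FG) (ℓ : V →ₗ[𝕜] 𝕜) :
    (C ⊓ (positive 𝕜 𝕜).comap ℓ).FG := by
  obtain ⟨s, hs, rfl⟩ := Submodule.fg_def.1 hC
  rw [← hull, hull_inf_comap_positive]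
  exact Submodule.fg_def.2 ⟨_, (hs.sep _).union ((hs.sep _).image2 _ (hs.sep _)), rfl⟩

lemma fg_top [FiniteDimensional 𝕜 V] : (⊤ : PointedCone 𝕜 V).FG := by
  let b := Module.finBasis 𝕜 V
  refine Submodule.fg_def.2 ⟨range b ∪ range (-⇑b), (finite_range _).union (finite_range _), ?_⟩
  refine eq_top_iff.2 fun x _ => ?_
  rw [← b.sum_repr x]
  refine Submodule.sum_mem _ fun i _ => ?_
  rcases le_total 0 (b.repr x i) with h | h
  · exact smul_mem _ h (subset_hull (Or.inl ⟨i, rfl⟩))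
  · rw [← neg_neg (b.repr x i), neg_smul, ← smul_neg]
    exact smul_mem _ (neg_nonneg.2 h) (subset_hull (Or.inr ⟨i, rfl⟩))

/-- One half of the **Minkowski–Weyl theorem**. -/
theorem DualFG.fg {M : Type*} [AddCommGroup M] [Module 𝕜 M] [FiniteDimensional 𝕜 V]
    {p : M →ₗ[𝕜] V →ₗ[𝕜] 𝕜} {C : PointedCone 𝕜 V} (hC : C.DualFG p) : C.FG := by
  classical
  obtain ⟨s, rfl⟩ := hC
  induction s using Finset.induction_on with
  | empty => simpa using fg_top
  | insert x s _ ih =>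
    rw [Finset.coe_insert, dual_insert, dual_singleton, inf_comm]
    exact FG.inf_comap_positive ih (p x)

end Field

section Topological

variable {E F : Type*} [TopologicalSpace E] [AddCommGroup E] [IsTopologicalAddGroup E]
  [Module ℝ E] [ContinuousSMul ℝ E] [LocallyConvexSpace ℝ E]
  [TopologicalSpace F] [AddCommGroup F] [Module ℝ F] [FiniteDimensional ℝ F]

/-- The other half of the **Minkowski–Weyl theorem**, for closed cones: the dual of a finitely
generated cone is finitely generated, and a closed cone is the dual of its dual. -/
theorem FG.dualFG_of_isClosed (p : F →ₗ[ℝ] E →ₗ[ℝ] ℝ) [p.IsContPerfPair] {C : PointedCone ℝ E}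
    (hC : C.FG) (hcl : IsClosed (C : Set E)) : C.DualFG p := by
  obtain ⟨S, hS, rfl⟩ := Submodule.fg_def.1 hC
  obtain ⟨T, hT, hTS⟩ := Submodule.fg_def.1 (DualFG.dual_of_finite p.flip hS).fg
  refine ⟨hT.toFinset, ?_⟩
  have bipolar := congrArg ProperCone.toPointedCone (ProperCone.dual_dual_flip p ⟨_, hcl⟩)
  rw [hT.coe_toFinset, ← dual_hull]
  calc dual p (hull ℝ T) = dual p (dual p.flip (hull ℝ S)) := by rw [hull, hTS, dual_hull]
    _ = hull ℝ S := bipolar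

end Topological

end PointedCone

section FA

variable {K A : Set X}

lemma mem_scaled_of_pos {t : ℝ} (ht : 0 < t) {x : X} : x ∈ scaled K A t ↔ t⁻¹ • x ∈ A := by
  rw [scaled, if_neg ht.ne']
  exact mem_smul_set_iff_inv_smul_mem₀ ht.ne' A x

lemma FA_nonneg (x : X) : 0 ≤ FA K A x :=
  Real.sSup_nonneg fun _ ht => ht.1

lemma bddAbove_FA_set (hAcl : IsClosed A) (h0 : (0 : X) ∉ A) (x : X) :
    BddAbove {t : ℝ | 0 ≤ t ∧ x ∈ scaled K A t} := by
  obtain ⟨d, hd, hball⟩ := Metric.isOpen_iff.1 hAcl.isOpen_compl 0 h0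
  refine ⟨‖x‖ / d, fun t ⟨ht0, hxt⟩ => ?_⟩
  rcases ht0.eq_or_lt with rfl | htpos
  · positivity
  · have := not_lt.1 fun h => hball (mem_ball_zero_iff.2 h) ((mem_scaled_of_pos htpos).1 hxt)
    rw [norm_smul, norm_inv, Real.norm_of_nonneg ht0, ← div_eq_inv_mul, le_div_iff₀ htpos] at this
    rwa [le_div_iff₀ hd, mul_comm]

lemma inv_smul_mem_of_le (hKcone : ∀ t : ℝ, 0 ≤ t → ∀ x ∈ K, t • x ∈ K) (hAK : A + K = A)
    (hAsub : A ⊆ K \ {0}) {x : X} {s t : ℝ} (hs : 0 < s) (hst : s ≤ t) (hxt : t⁻¹ • x ∈ A) :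
    s⁻¹ • x ∈ A := by
  have hx : s⁻¹ • x = t⁻¹ • x + (t / s - 1) • t⁻¹ • x := by
    rw [smul_smul, sub_mul, div_mul_eq_mul_div, mul_inv_cancel₀ (hs.trans_le hst).ne', one_div,
      one_mul, sub_smul]
    abel
  rw [hx, ← hAK]
  refine Set.add_mem_add hxt (hKcone _ ?_ _ (hAsub hxt).1)
  rw [sub_nonneg, one_le_div hs]
  exact hst

/-- The supremum defining `F_A` is attained. -/
theorem le_FA_iff (hKcone : ∀ t : ℝ, 0 ≤ t → ∀ x ∈ K, t • x ∈ K) (hAcl : IsClosed A)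
    (hAK : A + K = A) (hAsub : A ⊆ K \ {0}) {x : X} {t : ℝ} (ht : 0 < t) :
    t ≤ FA K A x ↔ t⁻¹ • x ∈ A := by
  have hbdd := bddAbove_FA_set (K := K) hAcl (fun h => (hAsub h).2 rfl) x
  refine ⟨fun h => ?_, fun h => le_csSup hbdd ⟨ht.le, (mem_scaled_of_pos ht).2 h⟩⟩
  have hne : {t : ℝ | 0 ≤ t ∧ x ∈ scaled K A t}.Nonempty := by
    by_contra hS
    rw [not_nonempty_iff_eq_empty] at hS
    rw [FA, hS, Real.sSup_empty] at h
    linarith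
  have hbelow : ∀ s ∈ Ioo 0 t, s⁻¹ • x ∈ A := fun s ⟨hs, hst⟩ => by
    obtain ⟨r, ⟨-, hxr⟩, hsr⟩ := exists_lt_of_lt_csSup hne (hst.trans_le h)
    exact inv_smul_mem_of_le hKcone hAK hAsub hs hsr.le
      ((mem_scaled_of_pos (hs.trans hsr)).1 hxr)
  have hlim : Tendsto (fun s : ℝ => s⁻¹ • x) (𝓝[<] t) (𝓝 (t⁻¹ • x)) :=
    (((continuousAt_inv₀ ht.ne').tendsto).smul_const x).mono_left nhdsWithin_le_nhds
  exact hAcl.mem_of_tendsto hlim (eventually_of_mem (Ioo_mem_nhdsLT ht) hbelow)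

theorem upperSemicontinuous_FA (hKcone : ∀ t : ℝ, 0 ≤ t → ∀ x ∈ K, t • x ∈ K)
    (hAcl : IsClosed A) (hAK : A + K = A) (hAsub : A ⊆ K \ {0}) :
    UpperSemicontinuous (FA K A) := by
  intro x c hc
  obtain ⟨t, hxt, htc⟩ := exists_between hc
  have ht : 0 < t := (FA_nonneg x).trans_lt hxt
  have hopen : IsOpen {y : X | t⁻¹ • y ∉ A} :=
    hAcl.isOpen_compl.preimage (continuous_const_smul t⁻¹)
  have hx : t⁻¹ • x ∉ A := fun h => hxt.not_ge ((le_FA_iff hKcone hAcl hAK hAsub ht).2 h)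
  filter_upwards [hopen.mem_nhds hx] with y hy
  exact (not_le.1 fun h => hy ((le_FA_iff hKcone hAcl hAK hAsub ht).1 h)).trans htc

theorem lowerSemicontinuousWithinAt_FA (hKcone : ∀ t : ℝ, 0 ≤ t → ∀ x ∈ K, t • x ∈ K)
    (hAcl : IsClosed A) (hAK : A + K = A) (hAsub : A ⊆ K \ {0}) {x : X}
    (hx : ∀ t : ℝ, t < 1 → ∀ᶠ y in 𝓝[K] x, y - t • x ∈ K) :
    LowerSemicontinuousWithinAt (FA K A) K x := by
  intro c hc
  rcases lt_or_ge c 0 with hc0 | hc0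
  · exact Eventually.of_forall fun y => hc0.trans_le (FA_nonneg y)
  set T := FA K A x
  have hT : 0 < T := hc0.trans_lt hc
  have hxA : T⁻¹ • x ∈ A := (le_FA_iff hKcone hAcl hAK hAsub hT).1 le_rfl
  obtain ⟨t, hct, ht1⟩ := exists_between ((div_lt_one hT).2 hc)
  have ht : 0 < t := (div_nonneg hc0 hT.le).trans_lt hct
  filter_upwards [hx t ht1] with y hy
  have hy' : (t * T)⁻¹ • y = T⁻¹ • x + (t * T)⁻¹ • (y - t • x) := by
    rw [smul_sub, smul_smul, mul_inv_rev, mul_assoc, inv_mul_cancel₀ ht.ne', mul_one]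
    abel
  have hle : t * T ≤ FA K A y := by
    rw [le_FA_iff hKcone hAcl hAK hAsub (mul_pos ht hT), hy', ← hAK]
    exact Set.add_mem_add hxA (hKcone _ (inv_nonneg.2 (mul_pos ht hT).le) _ hy)
  exact ((div_lt_iff₀ hT).1 hct).trans_le hle

end FA

/-- The constraints active at `a` vanish on `a`; the inactive ones stay positive near `a`. -/
lemma eventually_sub_smul_mem_of_polyhedral {ι : Type*} [Finite ι] {φ : ι → X →L[ℝ] ℝ}
    {K : Set X} (hK : K = {x | ∀ i, 0 ≤ φ i x}) {a : X} (ha : a ∈ K) {t : ℝ} (ht : t < 1) :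
    ∀ᶠ y in 𝓝[K] a, y - t • a ∈ K := by
  rw [hK] at ha ⊢
  refine eventually_all.2 fun i => ?_
  rcases (ha i).eq_or_lt with hai | hai
  · filter_upwards [self_mem_nhdsWithin] with y hy
    rw [map_sub, map_smul, ← hai, smul_zero, sub_zero]
    exact hy i
  · have hpos : 0 < φ i (a - t • a) := by
      rw [map_sub, map_smul, smul_eq_mul]
      nlinarith
    exact nhdsWithin_le_nhds <|
      ((φ i).continuous.comp (continuous_sub_right (t • a))).continuousAt.eventually
        (lt_mem_nhds hpos) |>.mono fun _ => le_of_lt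

theorem continuousOn_FA_of_polyhedral {ι : Type*} [Finite ι] {φ : ι → X →L[ℝ] ℝ}
    {K A : Set X} (hK : K = {x | ∀ i, 0 ≤ φ i x})
    (hKcone : ∀ t : ℝ, 0 ≤ t → ∀ x ∈ K, t • x ∈ K)
    (hAcl : IsClosed A) (hAK : A + K = A) (hAsub : A ⊆ K \ {0}) :
    ContinuousOn (FA K A) K := fun x hx =>
  continuousWithinAt_iff_lower_upperSemicontinuousWithinAt.2
    ⟨lowerSemicontinuousWithinAt_FA hKcone hAcl hAK hAsub fun _ ht =>
        eventually_sub_smul_mem_of_polyhedral hK hx ht,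
      (upperSemicontinuous_FA hKcone hAcl hAK hAsub).upperSemicontinuousWithinAt K x⟩

section Base

variable [FiniteDimensional ℝ X]

/-- By Farkas' lemma every point of the unit sphere in `K` is strictly positive for some
functional nonnegative on `K`; by compactness a finite sum of them is positive on that sphere. -/
theorem ProperCone.exists_norm_le_apply (K : ProperCone ℝ X) (hK : (K : Set X) ∩ -K = {0}) :
    ∃ u : X →L[ℝ] ℝ, ∀ x ∈ K, ‖x‖ ≤ u x := by
  set S := (K : Set X) ∩ Metric.sphere 0 1
  have hS : IsCompact S := (isCompact_sphere 0 1).inter_left K.isClosed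
  have hcover : S ⊆ ⋃ f : {f : X →L[ℝ] ℝ // ∀ x ∈ K, 0 ≤ f x}, {x | 0 < f.1 x} := by
    rintro s ⟨hsK, hs1⟩
    have hns : -s ∉ K := fun h => by
      have : s = 0 := hK.subset ⟨hsK, Set.mem_neg.2 h⟩
      simp [this] at hs1
    obtain ⟨f, hfK, hf⟩ := K.hyperplane_separation_point hns
    exact mem_iUnion.2 ⟨⟨f, hfK⟩, by simpa using hf⟩
  obtain ⟨t, ht⟩ := hS.elim_finite_subcover _
    (fun f => isOpen_lt continuous_const f.1.continuous) hcover
  set v := ∑ f ∈ t, f.1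
  have hvS : ∀ s ∈ S, 0 < v s := fun s hs => by
    obtain ⟨f, hft, hfs⟩ := mem_iUnion₂.1 (ht hs)
    rw [sum_apply]
    exact Finset.sum_pos' (fun g _ => g.2 s hs.1) ⟨f, hft, hfs⟩
  obtain ⟨m, hm, hmS⟩ := hS.exists_forall_le' v.continuous.continuousOn hvS
  refine ⟨m⁻¹ • v, fun x hx => ?_⟩
  rcases eq_or_ne x 0 with rfl | hx0
  · simp
  have hxS : ‖x‖⁻¹ • x ∈ S :=
    ⟨K.smul_mem hx (by positivity), by simpa using norm_smul_inv_norm (𝕜 := ℝ) hx0⟩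
  have hmx := hmS _ hxS
  rw [map_smul, smul_eq_mul, le_inv_mul_iff₀ (norm_pos_iff.2 hx0)] at hmx
  rw [smul_apply, smul_eq_mul, le_inv_mul_iff₀ hm]
  linarith

theorem ProperCone.isCompact_base (K : ProperCone ℝ X) {u : X →L[ℝ] ℝ}
    (hu : ∀ x ∈ K, ‖x‖ ≤ u x) : IsCompact ((K : Set X) ∩ {x | u x = 1}) :=
  Metric.isCompact_of_isClosed_isBounded
    (K.isClosed.inter (isClosed_eq u.continuous continuous_const))
    ((Metric.isBounded_closedBall (x := 0) (r := 1)).subset fun x ⟨hxK, hx1⟩ =>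
      mem_closedBall_zero_iff.2 (hx1 ▸ hu x hxK))

end Base

/-- Otherwise `e` would be the midpoint of `c` and `2 • e - c`, both in the base. -/
lemma two_smul_sub_notMem_of_mem_extremePoints {K : Set X} {u : X →L[ℝ] ℝ} {c e : X}
    (hc : c ∈ K ∩ {x | u x = 1}) (he : e ∈ (K ∩ {x | u x = 1}).extremePoints ℝ) (hec : e ≠ c) :
    (2 : ℝ) • e - c ∉ K := fun hk => by
  have hkC : (2 : ℝ) • e - c ∈ K ∩ {x | u x = 1} := by
    have hue : u e = 1 := he.1.2
    refine ⟨hk, ?_⟩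
    rw [mem_ofPred_eq, map_sub, map_smul, smul_eq_mul, hue, hc.2]
    norm_num
  refine hec ((mem_extremePoints.1 he).2 c hc _ hkC ⟨1 / 2, 1 / 2, by norm_num, by norm_num,
    by norm_num, ?_⟩).1.symm
  rw [smul_sub, smul_smul]
  module

section Converse

variable [FiniteDimensional ℝ X]

/-- At an accumulation point `c` of extreme points of the base, `F_{c + K}` is at least `1`,
while it is below `1/2` at every other extreme point. -/
theorem ProperCone.finite_extremePoints_of_forall_continuousOn (K : ProperCone ℝ X)
    {u : X →L[ℝ] ℝ} (hu : ∀ x ∈ K, ‖x‖ ≤ u x)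
    (hcont : ∀ A : Set X, A.Nonempty → IsClosed A → A + K = A → A ⊆ K \ {0} →
      ContinuousOn (FA K A) K) :
    (((K : Set X) ∩ {x | u x = 1}).extremePoints ℝ).Finite := by
  have hKcone : ∀ t : ℝ, 0 ≤ t → ∀ x ∈ K, t • x ∈ K := fun t ht x hx => K.smul_mem hx ht
  by_contra hinf
  obtain ⟨c, ⟨hcK, hcu⟩, hacc⟩ :=
    Set.Infinite.exists_accPt_of_subset_isCompact hinf (K.isCompact_base hu) extremePoints_subset
  have hmemA : ∀ y, y ∈ {c} + (K : Set X) ↔ y - c ∈ K := fun y => by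
    rw [singleton_add, mem_image]
    exact ⟨fun ⟨k, hk, hky⟩ => by rwa [← hky, add_sub_cancel_left],
      fun h => ⟨_, h, add_sub_cancel c y⟩⟩
  have hAcl : IsClosed ({c} + (K : Set X)) := by
    rw [singleton_add]
    exact (Homeomorph.addLeft c).isClosedMap _ K.isClosed
  have hAK : {c} + (K : Set X) + K = {c} + K := by rw [add_assoc, coe_add_coe]
  set A := {c} + (K : Set X)
  have hAsub : A ⊆ K \ {0} := fun y hy => by
    rw [hmemA] at hy
    refine ⟨by simpa using K.add_mem hcK hy, fun hy0 => ?_⟩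
    have := hu _ hy
    rw [mem_singleton_iff.1 hy0, zero_sub, map_neg, hcu, norm_neg] at this
    linarith [norm_nonneg c]
  have hAne : A.Nonempty := ⟨c, (hmemA c).2 (by simp)⟩
  have hFc : 1 ≤ FA K A c :=
    (le_FA_iff hKcone hAcl hAK hAsub one_pos).2 ((hmemA _).2 (by simp))
  have hev : ∀ᶠ y in 𝓝 c, y ∈ K → 1 / 2 < FA K A y :=
    eventually_nhdsWithin_iff.1 ((hcont A hAne hAcl hAK hAsub c hcK).eventually
      (lt_mem_nhds (by linarith)))
  obtain ⟨e, ⟨hec, heE⟩, he⟩ := ((accPt_iff_frequently.1 hacc).and_eventually hev).exists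
  have h2e := (le_FA_iff hKcone hAcl hAK hAsub (by norm_num : (0 : ℝ) < 1 / 2)).1
    (he (extremePoints_subset heE).1).le
  rw [hmemA, one_div, inv_inv] at h2e
  exact two_smul_sub_notMem_of_mem_extremePoints ⟨hcK, hcu⟩ heE hec h2e

theorem ProperCone.eq_hull_extremePoints (K : ProperCone ℝ X) {u : X →L[ℝ] ℝ}
    (hu : ∀ x ∈ K, ‖x‖ ≤ u x) (hE : (((K : Set X) ∩ {x | u x = 1}).extremePoints ℝ).Finite) :
    (K : PointedCone ℝ X) = PointedCone.hull ℝ (((K : Set X) ∩ {x | u x = 1}).extremePoints ℝ) := by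
  set C := (K : Set X) ∩ {x | u x = 1}
  have hC : convexHull ℝ (C.extremePoints ℝ) = C := by
    rw [← (hE.isClosed_convexHull ℝ).closure_eq]
    exact closure_convexHull_extremePoints (K.isCompact_base hu)
      (K.convex.inter (convex_hyperplane u.isLinear 1))
  refine le_antisymm (fun x hx => ?_)
    (Submodule.span_le.2 fun e he => (extremePoints_subset he).1)
  rcases eq_or_ne x 0 with rfl | hx0
  · exact zero_mem _
  have hux : 0 < u x := (norm_pos_iff.2 hx0).trans_le (hu x hx)
  have hxC : (u x)⁻¹ • x ∈ convexHull ℝ (C.extremePoints ℝ) := by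
    rw [hC]
    refine ⟨K.smul_mem hx (inv_nonneg.2 hux.le), ?_⟩
    rw [mem_ofPred_eq, map_smul, smul_eq_mul, inv_mul_cancel₀ hux.ne']
  have := PointedCone.smul_mem _ hux.le
    (convexHull_min PointedCone.subset_hull (PointedCone.convex _) hxC)
  rwa [smul_smul, mul_inv_cancel₀ hux.ne', one_smul] at this

theorem polyhedral_of_forall_continuousOn {K : Set X} (hKconv : Convex ℝ K)
    (hKclosed : IsClosed K) (hKcone : ∀ t : ℝ, 0 ≤ t → ∀ x ∈ K, t • x ∈ K)
    (hKpointed : K ∩ (-K) = {0})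
    (hcont : ∀ A : Set X, A.Nonempty → IsClosed A → A + K = A → A ⊆ K \ {0} →
      ContinuousOn (FA K A) K) :
    ∃ (m : ℕ) (φ : Fin m → (X →L[ℝ] ℝ)), K = {x : X | ∀ i, 0 ≤ φ i x} := by
  let Kp : ProperCone ℝ X :=
    { carrier := K
      add_mem' := fun {x y} hx hy => by
        simpa [smul_add, smul_smul] using hKcone 2 zero_le_two _
          (hKconv hx hy (by norm_num : (0 : ℝ) ≤ 1 / 2) (by norm_num : (0 : ℝ) ≤ 1 / 2)
            (by norm_num))
      zero_mem' := (hKpointed.symm.subset rfl).1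
      smul_mem' := fun c x hx => hKcone c c.2 x hx
      isClosed' := hKclosed }
  obtain ⟨u, hu⟩ := Kp.exists_norm_le_apply hKpointed
  have hE := Kp.finite_extremePoints_of_forall_continuousOn hu hcont
  have hFG : (Kp : PointedCone ℝ X).FG := by
    rw [Kp.eq_hull_extremePoints hu hE]
    exact Submodule.fg_def.2 ⟨_, hE, rfl⟩
  obtain ⟨T, hT⟩ := PointedCone.FG.dualFG_of_isClosed (topDualPairing ℝ X) hFG hKclosed
  refine ⟨T.card, fun i => T.equivFin.symm i, Set.ext fun x => ?_⟩
  rw [mem_ofPred_eq, ← T.equivFin.forall_congr_left (p := fun f : T => 0 ≤ f.1 x),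
    Subtype.forall]
  exact (SetLike.ext_iff.1 hT x).symm

end Converse

theorem stmt18_general [FiniteDimensional ℝ X]
    (K : Set X)
    (hKconv : Convex ℝ K) (hKclosed : IsClosed K)
    (hKcone : ∀ t : ℝ, 0 ≤ t → ∀ x ∈ K, t • x ∈ K)
    (hKpointed : K ∩ (-K) = {0}) :
    (∀ A : Set X, A.Nonempty → IsClosed A → A + K = A → A ⊆ K \ {0} →
        ContinuousOn (FA K A) K) ↔
      ∃ (m : ℕ) (φ : Fin m → (X →L[ℝ] ℝ)), K = {x : X | ∀ i, 0 ≤ φ i x} := by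
  refine ⟨polyhedral_of_forall_continuousOn hKconv hKclosed hKcone hKpointed, ?_⟩
  rintro ⟨m, φ, hK⟩ A - hAcl hAK hAsub
  exact continuousOn_FA_of_polyhedral hK hKcone hAcl hAK hAsub

/-- Let `K` be a pointed closed convex cone with nonempty interior in a
finite-dimensional real normed space. Then `F_A` is continuous on `K` for every `A`
satisfying condition (H) with this `K`, if and only if `K` is polyhedral (a finite
intersection of closed half-spaces `{x : ⟨x, x_i*⟩ ≥ 0}`). -/
theorem stmt18 [FiniteDimensional ℝ X] [Nontrivial X]
    (hdim : 2 ≤ Module.finrank ℝ X)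
    (K : Set X)
    (hKconv : Convex ℝ K) (hKclosed : IsClosed K)
    (hKcone : ∀ t : ℝ, 0 ≤ t → ∀ x ∈ K, t • x ∈ K)
    (hKpointed : K ∩ (-K) = {0}) (hKint : (interior K).Nonempty) :
    (∀ A : Set X, A.Nonempty → IsClosed A → A + K = A → A ⊆ K \ {0} →
        ContinuousOn (FA K A) K) ↔
      ∃ (m : ℕ) (φ : Fin m → (X →L[ℝ] ℝ)), K = {x : X | ∀ i, 0 ≤ φ i x} :=
  stmt18_general K hKconv hKclosed hKcone hKpointed
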